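/- Composite Euler–Maclaurin quadrature of level m: let r ≥ 1, f ∈ C^r[a,b], m, n ∈ ℕ, x_j = a + jh with h = (b-a)/n. Then ∫_a^b f(t) dt = ∑_{j=0}^{n-1} ∑_{k=1}^r ((-1)^{k+1}/(m! k!)) h^k (f^{(k-1)}(x_{j+1}) B_k^{[m-1]}(1) - f^{(k-1)}(x_j) B_k^{[m-1]}) + ((-h)^r/(m! r!)) ∫_a^b f^{(r)}(t) B_r^{[m-1]}((t-a)/h - ⌊(t-a)/h⌋) dt. -/

import Mathlib

open scoped Nat Real

/-- The partial sum `∑_{l=0}^{m-1} z^l / l!` of the exponential series. -/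
noncomputable def expPartialSum (m : ℕ) : PowerSeries ℝ :=
  ∑ l ∈ Finset.range m, PowerSeries.C ((1 : ℝ) / l !) * PowerSeries.X ^ l

/-- `B : ℕ → ℝ → ℝ` is the family of generalized Bernoulli polynomials of level `m`,
i.e. `z^m e^{xz} / (e^z - ∑_{l=0}^{m-1} z^l/l!) = ∑ B n x * z^n / n!`, stated
multiplicatively. -/
noncomputable def IsGenBernoulli (m : ℕ) (B : ℕ → ℝ → ℝ) : Prop :=
  ∀ x : ℝ,
    (PowerSeries.exp ℝ - expPartialSum m) * PowerSeries.mk (fun n => B n x / n !) =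
      PowerSeries.X ^ m * PowerSeries.mk (fun n => x ^ n / n !)

/-! On a cell `[c, c + h]` the kernel `B k ((t - c) / h)` has antiderivative
`h / (k + 1) * B (k + 1) ((t - c) / h)`, because comparing coefficients in the generating function
gives `B k' = k * B (k - 1)`; moreover `B 0 = m!`. Starting from `∫ f = (1 / m!) ∫ f * B 0` and
integrating by parts `r` times gives Euler–Maclaurin on one cell. On the `j`-th cell the periodic
argument `(t - a) / h - ⌊(t - a) / h⌋` equals `(t - x_j) / h`, so summing over the cells gives the
composite formula. -/

open Set Filter Topology MeasureTheory

lemma coeff_expPartialSum (m k : ℕ) :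
    PowerSeries.coeff k (expPartialSum m) = if k < m then (1 : ℝ) / k ! else 0 := by
  simp [expPartialSum, map_sum, PowerSeries.coeff_X_pow]

theorem ContDiffOn.hasDerivAt_iteratedDerivWithin {𝕜 F : Type*} [NontriviallyNormedField 𝕜]
    [NormedAddCommGroup F] [NormedSpace 𝕜 F] {f : 𝕜 → F} {s : Set 𝕜} {n : WithTop ℕ∞} {k : ℕ}
    (hf : ContDiffOn 𝕜 n f s) (hk : k < n) (hs : UniqueDiffOn 𝕜 s) {x : 𝕜} (hx : s ∈ 𝓝 x) :
    HasDerivAt (iteratedDerivWithin k f s) (iteratedDerivWithin (k + 1) f s x) x := by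
  rw [iteratedDerivWithin_succ]
  exact ((hf.differentiableOn_iteratedDerivWithin hk hs) x
    (mem_of_mem_nhds hx)).hasDerivWithinAt.hasDerivAt hx

namespace IsGenBernoulli

variable {m : ℕ} {B : ℕ → ℝ → ℝ}

/-- The coefficient of `z ^ (s + m)` in the defining identity. -/
theorem sum_div_factorial_mul_factorial (hB : IsGenBernoulli m B) (s : ℕ) (x : ℝ) :
    ∑ j ∈ Finset.range (s + 1), B j x / (j ! * (s + m - j)!) = x ^ s / s ! := by
  have h := congrArg (PowerSeries.coeff (s + m)) (hB x)
  rw [PowerSeries.coeff_mul, PowerSeries.coeff_X_pow_mul, ← Finset.Nat.sum_antidiagonal_swap,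
    Finset.Nat.sum_antidiagonal_eq_sum_range_succ_mk] at h
  simp only [Prod.swap_prod_mk, map_sub, PowerSeries.coeff_exp, coeff_expPartialSum,
    PowerSeries.coeff_mk, map_div₀, map_one, map_natCast] at h
  rw [← h, ← Finset.sum_subset (Finset.range_subset_range.2 (by omega : s + 1 ≤ s + m + 1))]
  · refine Finset.sum_congr rfl fun j hj => ?_
    rw [if_neg (by simp only [Finset.mem_range] at hj; omega)]
    ring
  · intro j _ hj
    rw [if_pos (by simp only [Finset.mem_range] at *; omega)]
    ring

theorem eq_sub_sum (hB : IsGenBernoulli m B) (s : ℕ) (x : ℝ) :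
    B s x = m ! * x ^ s - m ! * s ! * ∑ j ∈ Finset.range s, B j x / (j ! * (s + m - j)!) := by
  have h := hB.sum_div_factorial_mul_factorial s x
  rw [Finset.sum_range_succ, Nat.add_sub_cancel_left] at h
  field_simp at h ⊢
  linear_combination h

theorem apply_zero (hB : IsGenBernoulli m B) (x : ℝ) : B 0 x = m ! := by
  simpa using hB.eq_sub_sum 0 x

theorem hasDerivAt (hB : IsGenBernoulli m B) (s : ℕ) (x : ℝ) :
    HasDerivAt (B s) (s * B (s - 1) x) x := by
  induction s using Nat.strong_induction_on generalizing x with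
  | _ s ih =>
  rcases s with _ | s
  · simpa [funext hB.apply_zero] using hasDerivAt_const x (m ! : ℝ)
  have hsum : HasDerivAt (fun y => ∑ j ∈ Finset.range (s + 1), B j y / (j ! * (s + 1 + m - j)!))
      (∑ j ∈ Finset.range (s + 1), j * B (j - 1) x / (j ! * (s + 1 + m - j)!)) x :=
    HasDerivAt.fun_sum fun j hj => (ih j (Finset.mem_range.1 hj) x).div_const _
  have hreindex : ∑ j ∈ Finset.range (s + 1), j * B (j - 1) x / (j ! * (s + 1 + m - j)!) =
      ∑ j ∈ Finset.range s, B j x / (j ! * (s + m - j)!) := by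
    rw [Finset.sum_range_succ']
    refine (add_eq_left.2 (by simp)).trans (Finset.sum_congr rfl fun j _ => ?_)
    rw [show s + 1 + m - (j + 1) = s + m - j by omega, Nat.factorial_succ]
    push_cast
    field_simp
  rw [funext (hB.eq_sub_sum (s + 1))]
  refine (((hasDerivAt_pow (s + 1) x).const_mul (m ! : ℝ)).sub
    (hsum.const_mul _)).congr_deriv ?_
  rw [hreindex, Nat.add_sub_cancel, hB.eq_sub_sum s x, Nat.factorial_succ]
  push_cast
  ring

theorem continuous (hB : IsGenBernoulli m B) (s : ℕ) : Continuous (B s) :=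
  continuous_iff_continuousAt.2 fun x => (hB.hasDerivAt s x).continuousAt

theorem integral_mul_eq (hB : IsGenBernoulli m B) (k : ℕ) {F F' : ℝ → ℝ} {c h : ℝ}
    (hh : 0 < h) (hF : ContinuousOn F (Icc c (c + h)))
    (hFF' : ∀ x ∈ Ioo c (c + h), HasDerivAt F (F' x) x)
    (hF' : IntervalIntegrable F' volume c (c + h)) :
    ∫ t in c..c + h, F t * B k ((t - c) / h) =
      h / (k + 1) * (F (c + h) * B (k + 1) 1 - F c * B (k + 1) 0 -
        ∫ t in c..c + h, F' t * B (k + 1) ((t - c) / h)) := by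
  have hch : c ≤ c + h := by linarith
  have hv : ∀ x, HasDerivAt (fun t => h / (k + 1) * B (k + 1) ((t - c) / h))
      (B k ((x - c) / h)) x := by
    intro x
    have := ((hB.hasDerivAt (k + 1) _).comp x (((hasDerivAt_id x).sub_const c).div_const h)
      ).const_mul (h / (k + 1))
    refine this.congr_deriv ?_
    push_cast
    field_simp
    simp
  have hBk : Continuous fun t => B k ((t - c) / h) :=
    (hB.continuous k).comp ((continuous_id.sub continuous_const).div_const h)
  have ibp := intervalIntegral.integral_mul_deriv_eq_deriv_mul_of_hasDerivAt
    (by rwa [uIcc_of_le hch]) (fun x _ => (hv x).continuousAt.continuousWithinAt)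
    (by rwa [min_eq_left hch, max_eq_right hch]) (fun x _ => hv x) hF'
    (hBk.intervalIntegrable _ _)
  simp only [mul_left_comm (F' _), intervalIntegral.integral_const_mul] at ibp
  rw [ibp, add_sub_cancel_left, sub_self, zero_div, div_self hh.ne']
  ring

theorem integral_eq_sum_add_integral_iteratedDerivWithin (hB : IsGenBernoulli m B)
    {f : ℝ → ℝ} {s : Set ℝ} (hs : UniqueDiffOn ℝ s) {c h : ℝ} (hh : 0 < h)
    (hcs : Icc c (c + h) ⊆ s) (r : ℕ) (hf : ContDiffOn ℝ r f s) :
    ∫ t in c..c + h, f t =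
      (∑ k ∈ Finset.Icc 1 r, ((-1 : ℝ) ^ (k + 1) / ((m ! : ℝ) * (k ! : ℝ))) * h ^ k *
        (iteratedDerivWithin (k - 1) f s (c + h) * B k 1 -
          iteratedDerivWithin (k - 1) f s c * B k 0)) +
      ((-h) ^ r / ((m ! : ℝ) * (r ! : ℝ))) *
        ∫ t in c..c + h, iteratedDerivWithin r f s t * B r ((t - c) / h) := by
  induction r with
  | zero =>
    simp only [Finset.Icc_eq_empty_of_lt zero_lt_one, Finset.sum_empty, zero_add, pow_zero,
      Nat.factorial_zero, Nat.cast_one, mul_one, iteratedDerivWithin_zero, hB.apply_zero,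
      ← intervalIntegral.integral_const_mul]
    exact intervalIntegral.integral_congr fun t _ => by field_simp
  | succ r ih =>
    have hcont : ContinuousOn (iteratedDerivWithin (r + 1) f s) (Icc c (c + h)) :=
      (hf.continuousOn_iteratedDerivWithin le_rfl hs).mono hcs
    have hderiv : ∀ x ∈ Ioo c (c + h),
        HasDerivAt (iteratedDerivWithin r f s) (iteratedDerivWithin (r + 1) f s x) x :=
      fun x hx => hf.hasDerivAt_iteratedDerivWithin (by exact_mod_cast r.lt_succ_self) hs
        (mem_of_superset (Icc_mem_nhds hx.1 hx.2) hcs)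
    rw [ih (hf.of_le (by exact_mod_cast r.le_succ)),
      hB.integral_mul_eq r hh ((hf.continuousOn_iteratedDerivWithin
        (by exact_mod_cast r.le_succ) hs).mono hcs) hderiv
        (hcont.intervalIntegrable_of_Icc (by linarith)),
      Finset.sum_Icc_succ_top (by omega), Nat.add_sub_cancel, Nat.factorial_succ]
    push_cast
    field_simp
    ring

end IsGenBernoulli

theorem sub_floor_div_eq {a h t : ℝ} (hh : 0 < h) (j : ℕ)
    (ht : t ∈ Ico (a + j * h) (a + j * h + h)) :
    (t - a) / h - ⌊(t - a) / h⌋ = (t - (a + j * h)) / h := by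
  rw [Int.self_sub_floor, Int.fract_eq_iff]
  refine ⟨div_nonneg (by linarith [ht.1]) hh.le, (div_lt_one hh).2 (by linarith [ht.2]), j, ?_⟩
  field_simp
  push_cast
  ring

theorem integral_eq_sum_integral_add_mul {E : Type*} [NormedAddCommGroup E] [NormedSpace ℝ E]
    {g : ℝ → E} {a b h : ℝ} {n : ℕ} (hb : a + n * h = b)
    (hg : ∀ j < n, IntervalIntegrable g volume (a + j * h) (a + j * h + h)) :
    ∫ t in a..b, g t =
      ∑ j ∈ Finset.range n, ∫ t in a + j * h..a + j * h + h, g t := by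
  have hnode : ∀ j : ℕ, a + ((j + 1 : ℕ) : ℝ) * h = a + j * h + h := fun j => by push_cast; ring
  have := intervalIntegral.sum_integral_adjacent_intervals (a := fun j : ℕ => a + j * h)
    (fun j hj => by simpa only [hnode] using hg j hj)
  simp only [hnode, Nat.cast_zero, zero_mul, add_zero, hb] at this
  exact this.symm

theorem eqOn_mul_comp_sub_floor {g w : ℝ → ℝ} {a h : ℝ} (hh : 0 < h) (j : ℕ) :
    EqOn (fun t => g t * w ((t - a) / h - ⌊(t - a) / h⌋))
      (fun t => g t * w ((t - (a + j * h)) / h)) (Ioo (a + j * h) (a + j * h + h)) :=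
  fun t ht => by simp only [sub_floor_div_eq hh j (Ioo_subset_Ico_self ht)]

theorem integral_mul_comp_sub_floor {g w : ℝ → ℝ} {a h : ℝ} (hh : 0 < h) (j : ℕ) :
    ∫ t in a + j * h..a + j * h + h, g t * w ((t - a) / h - ⌊(t - a) / h⌋) =
      ∫ t in a + j * h..a + j * h + h, g t * w ((t - (a + j * h)) / h) :=
  intervalIntegral.integral_congr_Ioo_of_le (by linarith) (eqOn_mul_comp_sub_floor hh j)

theorem intervalIntegrable_mul_comp_sub_floor {g w : ℝ → ℝ} {a h : ℝ} (hh : 0 < h) (j : ℕ)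
    (hg : ContinuousOn g (Icc (a + j * h) (a + j * h + h))) (hw : Continuous w) :
    IntervalIntegrable (fun t => g t * w ((t - a) / h - ⌊(t - a) / h⌋)) volume
      (a + j * h) (a + j * h + h) :=
  ((hg.mul (hw.comp (continuous_sub_right _ |>.div_const h)).continuousOn
    ).intervalIntegrable_of_Icc (by linarith)).congr_uIoo
    (by rw [uIoo_of_le (by linarith)]; exact (eqOn_mul_comp_sub_floor hh j).symm)

theorem stmt_18_general (m : ℕ) (B : ℕ → ℝ → ℝ) (hB : IsGenBernoulli m B)
    (r : ℕ) (a b : ℝ) (hab : a ≤ b) (f : ℝ → ℝ)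
    (hf : ContDiffOn ℝ r f (Set.Icc a b)) (n : ℕ) (hn : 1 ≤ n) :
    ∫ t in a..b, f t =
      (∑ j ∈ Finset.range n, ∑ k ∈ Finset.Icc 1 r,
        ((-1 : ℝ) ^ (k + 1) / ((m ! : ℝ) * (k ! : ℝ))) * ((b - a) / n) ^ k *
          (iteratedDerivWithin (k - 1) f (Set.Icc a b) (a + (j + 1) * ((b - a) / n)) *
              B k 1 -
            iteratedDerivWithin (k - 1) f (Set.Icc a b) (a + j * ((b - a) / n)) *
              B k 0)) +
      ((-(b - a) / n) ^ r / ((m ! : ℝ) * (r ! : ℝ))) *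
        ∫ t in a..b, iteratedDerivWithin r f (Set.Icc a b) t *
          B r ((t - a) / ((b - a) / n) - (⌊(t - a) / ((b - a) / n)⌋ : ℝ)) := by
  rcases hab.eq_or_lt with rfl | hab
  · simp only [sub_self, zero_div, intervalIntegral.integral_same, mul_zero, add_zero]
    exact (Finset.sum_eq_zero fun j _ => Finset.sum_eq_zero fun k hk => by
      rw [zero_pow (Nat.one_le_iff_ne_zero.1 (Finset.mem_Icc.1 hk).1), mul_zero, zero_mul]).symm
  set h := (b - a) / n with h_def
  have hh : 0 < h := div_pos (sub_pos.2 hab) (by exact_mod_cast hn)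
  have hb : a + n * h = b := by rw [h_def]; field_simp; ring
  have hcell : ∀ j < n, Icc (a + j * h) (a + j * h + h) ⊆ Icc a b := fun j hj =>
    Icc_subset_Icc (by nlinarith [(j.cast_nonneg : (0 : ℝ) ≤ j)])
      (by rw [← hb]; nlinarith [(by exact_mod_cast hj : (j : ℝ) + 1 ≤ n)])
  have hD : ContinuousOn (iteratedDerivWithin r f (Icc a b)) (Icc a b) :=
    hf.continuousOn_iteratedDerivWithin le_rfl (uniqueDiffOn_Icc hab)
  rw [integral_eq_sum_integral_add_mul hb fun j hj =>
      (hf.continuousOn.mono (hcell j hj)).intervalIntegrable_of_Icc (by linarith),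
    integral_eq_sum_integral_add_mul hb fun j hj =>
      intervalIntegrable_mul_comp_sub_floor hh j (hD.mono (hcell j hj)) (hB.continuous r),
    Finset.mul_sum, ← Finset.sum_add_distrib]
  refine Finset.sum_congr rfl fun j hj => ?_
  rw [hB.integral_eq_sum_add_integral_iteratedDerivWithin (uniqueDiffOn_Icc hab) hh
      (hcell j (Finset.mem_range.1 hj)) r hf,
    integral_mul_comp_sub_floor hh j, neg_div, show a + (j + 1) * h = a + j * h + h by ring]

theorem stmt_18 (m : ℕ) (hm : 0 < m) (B : ℕ → ℝ → ℝ) (hB : IsGenBernoulli m B)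
    (r : ℕ) (hr : 1 ≤ r) (a b : ℝ) (hab : a ≤ b) (f : ℝ → ℝ)
    (hf : ContDiffOn ℝ r f (Set.Icc a b)) (n : ℕ) (hn : 1 ≤ n) :
    ∫ t in a..b, f t =
      (∑ j ∈ Finset.range n, ∑ k ∈ Finset.Icc 1 r,
        ((-1 : ℝ) ^ (k + 1) / ((m ! : ℝ) * (k ! : ℝ))) * ((b - a) / n) ^ k *
          (iteratedDerivWithin (k - 1) f (Set.Icc a b) (a + (j + 1) * ((b - a) / n)) *
              B k 1 -
            iteratedDerivWithin (k - 1) f (Set.Icc a b) (a + j * ((b - a) / n)) *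
              B k 0)) +
      ((-(b - a) / n) ^ r / ((m ! : ℝ) * (r ! : ℝ))) *
        ∫ t in a..b, iteratedDerivWithin r f (Set.Icc a b) t *
          B r ((t - a) / ((b - a) / n) - (⌊(t - a) / ((b - a) / n)⌋ : ℝ)) :=
  stmt_18_general m B hB r a b hab f hf n hn
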